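/- Let S and A be nonempty finite sets, r : S×A → ℝ with |r(s,a)| ≤ r_max for all (s,a), γ ∈ (0,1), P a transition kernel, τ > 0 and k ≥ 1. Let (π_j, q_j)_{j≥0} be the M-VI(1,τ) sequence with errors (ε_j)_{j≥1}, started from the uniform policy π₀(s)(a) = 1/|A| and from q₀ with ‖q₀ − τ·ln π₀‖∞ ≤ r_max/(1−γ), and assume ‖q_j − τ·ln π_j‖∞ ≤ r_max/(1−γ) for all 1 ≤ j ≤ k. Let q_* be the unique fixed point of the Bellman optimality operator and q_{π_k} the unique fixed point of T_{π_k}. Then ‖q_* − q_{π_k}‖∞ ≤ (2/(1−γ))·‖(1/k)·∑_{j=1}^k ε_j‖∞ + (4/(1−γ)²)·(r_max + τ·ln|A|)/k. -/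

import Mathlib

/-!
Write `q'_j = q_j - τ ln π_j` (`qReg`) and `h_j = ∑_{i<j} q'_i` (`qRegSum`). Starting from the
uniform policy, induction gives `π_j = softmax (h_j / τ)`, so `τ ln π_j = h_j - V_j` where `V_j` is
the log-sum-exp of `h_j` (`softValue`). The Munchausen bonus therefore cancels the entropy term
exactly, `q'_{j+1} = r + γ P (V_{j+1} - V_j) + ε_{j+1}`, and the sum telescopes to
`h_{k+1} = q'_0 + k r + γ P (V_k - V_0) + ∑_{j=1}^k ε_j`. Since
`h_k ≤ V_k ≤ ⟨π_k, h_k⟩ + τ ln |A|`, both `k q_* - h_{k+1}` and `h_{k+1} - k q_{π_k}` satisfy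
one-sided contraction inequalities; adding them and using `q_{π_k} ≤ q_*` gives the bound.
-/

open Finset
open Real (exp log exp_pos exp_add log_exp log_div log_inv le_log_iff_exp_le log_natCast_nonneg)

section Softmax

variable {A : Type*} [Fintype A]

noncomputable def softmax (τ : ℝ) (v : A → ℝ) (a : A) : ℝ :=
  exp (v a / τ) / ∑ a', exp (v a' / τ)

noncomputable def logSumExp (τ : ℝ) (v : A → ℝ) : ℝ :=
  τ * log (∑ a, exp (v a / τ))

lemma softmax_add_const (τ : ℝ) (v : A → ℝ) (c : ℝ) :
    softmax τ (fun a => v a + c) = softmax τ v := by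
  have hsplit : ∀ a, exp ((v a + c) / τ) = exp (v a / τ) * exp (c / τ) := fun a => by
    rw [← exp_add, add_div]
  funext a
  simp only [softmax, hsplit, ← sum_mul]
  exact mul_div_mul_right _ _ (exp_pos _).ne'

lemma softmax_const_zero (τ : ℝ) (a : A) :
    softmax τ (fun _ => 0) a = 1 / Fintype.card A := by
  simp [softmax]

lemma logSumExp_const_zero (τ : ℝ) :
    logSumExp τ (fun _ : A => 0) = τ * log (Fintype.card A) := by
  simp [logSumExp]

lemma sum_mul_log_inv_le_log_card {p : A → ℝ} (hp : ∀ a, 0 < p a) (hp1 : ∑ a, p a = 1) :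
    ∑ a, p a * log (p a)⁻¹ ≤ log (Fintype.card A) := by
  have jensen := strictConcaveOn_log_Ioi.concaveOn.le_map_sum (t := univ) (w := p)
    (p := fun a => (p a)⁻¹) (fun a _ => (hp a).le) hp1 (fun a _ => inv_pos.2 (hp a))
  simpa [mul_inv_cancel₀ (hp _).ne'] using jensen

variable [Nonempty A]

lemma sum_exp_div_pos (τ : ℝ) (v : A → ℝ) : 0 < ∑ a, exp (v a / τ) :=
  sum_pos (fun _ _ => exp_pos _) univ_nonempty

lemma softmax_pos (τ : ℝ) (v : A → ℝ) (a : A) : 0 < softmax τ v a :=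
  div_pos (exp_pos _) (sum_exp_div_pos τ v)

lemma sum_softmax (τ : ℝ) (v : A → ℝ) : ∑ a, softmax τ v a = 1 := by
  unfold softmax
  rw [← sum_div, div_self (sum_exp_div_pos τ v).ne']

lemma mul_log_softmax {τ : ℝ} (hτ : τ ≠ 0) (v : A → ℝ) (a : A) :
    τ * log (softmax τ v a) = v a - logSumExp τ v := by
  rw [softmax, log_div (exp_pos _).ne' (sum_exp_div_pos τ v).ne', log_exp, logSumExp,
    mul_sub, mul_div_cancel₀ _ hτ]

lemma le_logSumExp {τ : ℝ} (hτ : 0 < τ) (v : A → ℝ) (a : A) : v a ≤ logSumExp τ v := by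
  have : v a / τ ≤ log (∑ a', exp (v a' / τ)) :=
    (le_log_iff_exp_le (sum_exp_div_pos τ v)).2
      (single_le_sum (f := fun a' => exp (v a' / τ)) (fun _ _ => (exp_pos _).le) (mem_univ a))
  rwa [div_le_iff₀' hτ] at this

lemma logSumExp_le_sum_softmax_mul_add {τ : ℝ} (hτ : 0 < τ) (v : A → ℝ) :
    logSumExp τ v ≤ ∑ a, softmax τ v a * v a + τ * log (Fintype.card A) := by
  have hv : ∀ a, v a = logSumExp τ v - τ * log (softmax τ v a)⁻¹ := fun a => by
    rw [log_inv, mul_neg, mul_log_softmax hτ.ne']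
    ring
  have hentropy := sum_mul_log_inv_le_log_card (softmax_pos τ v) (sum_softmax τ v)
  calc logSumExp τ v
      = ∑ a, softmax τ v a * v a + τ * ∑ a, softmax τ v a * log (softmax τ v a)⁻¹ := by
        simp_rw [mul_sum, ← sum_add_distrib]
        conv_lhs => rw [← one_mul (logSumExp τ v), ← sum_softmax τ v, sum_mul]
        refine sum_congr rfl fun a _ => ?_
        conv_rhs => rw [hv a]
        ring
    _ ≤ _ := by gcongr

end Softmax

lemma sum_mul_le_of_le {ι : Type*} [Fintype ι] {p x : ι → ℝ} {c : ℝ} (hp0 : ∀ i, 0 ≤ p i)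
    (hp1 : ∑ i, p i = 1) (hx : ∀ i, x i ≤ c) : ∑ i, p i * x i ≤ c :=
  calc ∑ i, p i * x i ≤ ∑ i, p i * c :=
        sum_le_sum fun i _ => mul_le_mul_of_nonneg_left (hx i) (hp0 i)
    _ = c := by rw [← sum_mul, hp1, one_mul]

lemma abs_le_mul_sup'_abs_one_div_mul {X : Type*} [Fintype X] [Nonempty X] {k : ℝ} (hk : 0 < k)
    (f : X → ℝ) (x : X) : |f x| ≤ k * univ.sup' univ_nonempty fun x => |(1 / k) * f x| :=
  calc |f x| = k * |(1 / k) * f x| := by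
        rw [abs_mul, abs_of_pos (one_div_pos.2 hk), ← mul_assoc, mul_one_div_cancel hk.ne',
          one_mul]
    _ ≤ _ := mul_le_mul_of_nonneg_left (le_sup' (fun x => |(1 / k) * f x|) (mem_univ x)) hk.le

lemma one_sub_mul_sup'_le {X S : Type*} [Fintype X] [Nonempty X] [Fintype S] {P : X → S → ℝ}
    (hP0 : ∀ i s, 0 ≤ P i s) (hP1 : ∀ i, ∑ s, P i s = 1) {γ b c : ℝ} (hγ : 0 ≤ γ)
    {x : X → ℝ} {w : S → ℝ} (hw : ∀ s, w s ≤ univ.sup' univ_nonempty x + c)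
    (hx : ∀ i, x i ≤ γ * ∑ s, P i s * w s + b) :
    (1 - γ) * univ.sup' univ_nonempty x ≤ γ * c + b := by
  obtain ⟨i, -, hi⟩ := exists_mem_eq_sup' univ_nonempty x
  have := mul_le_mul_of_nonneg_left (sum_mul_le_of_le (hP0 i) (hP1 i) hw) hγ
  linarith [hx i]

lemma evaluation_fixedPoint_le_optimality_fixedPoint {S A : Type*} [Fintype S] [Fintype A]
    [Nonempty S] [Nonempty A] {r : S × A → ℝ} {γ : ℝ} (hγ0 : 0 ≤ γ) (hγ1 : γ < 1)
    {P : S × A → S → ℝ} (hP0 : ∀ sa s', 0 ≤ P sa s') (hP1 : ∀ sa, ∑ s', P sa s' = 1)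
    {p : S → A → ℝ} (hp0 : ∀ s a, 0 ≤ p s a) (hp1 : ∀ s, ∑ a, p s a = 1)
    {qstar qp : S × A → ℝ}
    (hqstar : ∀ s a, qstar (s, a)
      = r (s, a) + γ * ∑ s', P (s, a) s' * univ.sup' univ_nonempty fun a' => qstar (s', a'))
    (hqp : ∀ s a, qp (s, a) = r (s, a) + γ * ∑ s', P (s, a) s' * ∑ a', p s' a' * qp (s', a'))
    (x : S × A) : qp x ≤ qstar x := by
  set vstar : S → ℝ := fun s => univ.sup' univ_nonempty fun a => qstar (s, a)
  set D := univ.sup' univ_nonempty fun x => qp x - qstar x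
  have hD : (1 - γ) * D ≤ γ * 0 + 0 := by
    refine one_sub_mul_sup'_le hP0 hP1 hγ0 (w := fun s' => ∑ a', p s' a' * qp (s', a') - vstar s')
      (fun s' => ?_) fun ⟨s, a⟩ => ?_
    · have hgreedy : ∑ a', p s' a' * qstar (s', a') ≤ vstar s' :=
        sum_mul_le_of_le (hp0 s') (hp1 s') fun a' => le_sup' (fun a => qstar (s', a)) (mem_univ a')
      have hgap : ∑ a', p s' a' * (qp (s', a') - qstar (s', a')) ≤ D :=
        sum_mul_le_of_le (hp0 s') (hp1 s') fun a' => le_sup' (fun x => qp x - qstar x) (mem_univ _)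
      simp only [mul_sub, sum_sub_distrib] at hgap
      linarith
    · rw [hqp s a, hqstar s a]
      simp only [mul_sub, sum_sub_distrib]
      linarith
  have hD0 : D ≤ 0 := nonpos_of_mul_nonpos_right (by simpa using hD) (sub_pos.2 hγ1)
  exact sub_nonpos.1 ((le_sup' (fun x => qp x - qstar x) (mem_univ x)).trans hD0)

section MunchausenVI

variable {S A : Type*}

noncomputable def qReg (τ : ℝ) (π : ℕ → S → A → ℝ) (q : ℕ → S × A → ℝ) (j : ℕ) (x : S × A) :
    ℝ :=
  q j x - τ * log (π j x.1 x.2)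

noncomputable def qRegSum (τ : ℝ) (π : ℕ → S → A → ℝ) (q : ℕ → S × A → ℝ) (j : ℕ)
    (x : S × A) : ℝ :=
  ∑ i ∈ range j, qReg τ π q i x

noncomputable def softValue [Fintype A] (τ : ℝ) (π : ℕ → S → A → ℝ) (q : ℕ → S × A → ℝ) (j : ℕ)
    (s : S) : ℝ :=
  logSumExp τ fun a => qRegSum τ π q j (s, a)

variable {τ : ℝ} {π : ℕ → S → A → ℝ} {q : ℕ → S × A → ℝ}

lemma qRegSum_succ (j : ℕ) (x : S × A) :
    qRegSum τ π q (j + 1) x = qRegSum τ π q j x + qReg τ π q j x :=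
  sum_range_succ _ j

variable [Fintype A]

lemma softValue_zero (s : S) : softValue τ π q 0 s = τ * log (Fintype.card A) := by
  simp only [softValue, qRegSum, range_zero, sum_empty]
  exact logSumExp_const_zero τ

variable [Nonempty A] (hπ0 : ∀ s a, π 0 s a = 1 / (Fintype.card A : ℝ))
  (hπ : ∀ j s, π (j + 1) s = softmax τ fun a => q j (s, a))
include hπ0 hπ

lemma policy_eq_softmax (hτ : τ ≠ 0) (j : ℕ) (s : S) :
    π j s = softmax τ fun a => qRegSum τ π q j (s, a) := by
  induction j generalizing s with
  | zero =>
    funext a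
    simp only [hπ0, qRegSum, range_zero, sum_empty, softmax_const_zero]
  | succ j ih =>
    have hshift : (fun a => q j (s, a))
        = fun a => qRegSum τ π q (j + 1) (s, a) + -softValue τ π q j s := by
      funext a
      have hlog := mul_log_softmax hτ (fun a => qRegSum τ π q j (s, a)) a
      rw [← ih] at hlog
      rw [qRegSum_succ, qReg, softValue]
      linarith
    rw [hπ, hshift, softmax_add_const]

lemma policy_pos (hτ : τ ≠ 0) (j : ℕ) (s : S) (a : A) : 0 < π j s a := by
  rw [policy_eq_softmax hπ0 hπ hτ]
  exact softmax_pos τ _ a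

lemma sum_policy (hτ : τ ≠ 0) (j : ℕ) (s : S) : ∑ a, π j s a = 1 := by
  rw [policy_eq_softmax hπ0 hπ hτ]
  exact sum_softmax τ _

lemma mul_log_policy (hτ : τ ≠ 0) (j : ℕ) (s : S) (a : A) :
    τ * log (π j s a) = qRegSum τ π q j (s, a) - softValue τ π q j s := by
  rw [policy_eq_softmax hπ0 hπ hτ]
  exact mul_log_softmax hτ _ a

lemma sub_mul_log_policy_succ (hτ : τ ≠ 0) (j : ℕ) (s : S) (a : A) :
    q j (s, a) - τ * log (π (j + 1) s a)
      = softValue τ π q (j + 1) s - softValue τ π q j s := by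
  have hj := mul_log_policy hπ0 hπ hτ j s a
  have hj1 := mul_log_policy hπ0 hπ hτ (j + 1) s a
  rw [qRegSum_succ, qReg] at hj1
  linarith

variable [Fintype S] {r : S × A → ℝ} {γ : ℝ} {P : S × A → S → ℝ} {ε : ℕ → S × A → ℝ}
  (hq : ∀ j s a, q (j + 1) (s, a)
      = r (s, a) + 1 * τ * log (π (j + 1) s a)
        + γ * ∑ s', P (s, a) s' *
            (∑ a', π (j + 1) s' a' * (q j (s', a') - τ * log (π (j + 1) s' a')))
        + ε (j + 1) (s, a))
include hq

lemma qReg_succ (hτ : τ ≠ 0) (j : ℕ) (s : S) (a : A) :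
    qReg τ π q (j + 1) (s, a) = r (s, a)
      + γ * ∑ s', P (s, a) s' * (softValue τ π q (j + 1) s' - softValue τ π q j s')
      + ε (j + 1) (s, a) := by
  have hmunchausen : ∀ s', ∑ a', π (j + 1) s' a' * (q j (s', a') - τ * log (π (j + 1) s' a'))
      = softValue τ π q (j + 1) s' - softValue τ π q j s' := fun s' => by
    simp only [sub_mul_log_policy_succ hπ0 hπ hτ, ← sum_mul, sum_policy hπ0 hπ hτ, one_mul]
  rw [qReg, hq]
  simp only [hmunchausen]
  ring

lemma qRegSum_succ_eq (hτ : τ ≠ 0) (k : ℕ) (s : S) (a : A) :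
    qRegSum τ π q (k + 1) (s, a) = qReg τ π q 0 (s, a) + k * r (s, a)
      + γ * ∑ s', P (s, a) s' * (softValue τ π q k s' - τ * log (Fintype.card A))
      + ∑ j ∈ Icc 1 k, ε j (s, a) := by
  have htelescope :
      ∑ i ∈ range k, ∑ s', P (s, a) s' * (softValue τ π q (i + 1) s' - softValue τ π q i s')
      = ∑ s', P (s, a) s' * (softValue τ π q k s' - τ * log (Fintype.card A)) := by
    rw [sum_comm]
    refine sum_congr rfl fun s' _ => ?_
    rw [← mul_sum, sum_range_sub (fun i => softValue τ π q i s'), softValue_zero]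
  have hreindex : ∑ i ∈ range k, ε (i + 1) (s, a) = ∑ j ∈ Icc 1 k, ε j (s, a) := by
    rw [← Ico_add_one_right_eq_Icc, sum_Ico_eq_sum_range]
    simp only [add_comm, add_tsub_cancel_right]
  rw [qRegSum, sum_range_succ', add_comm]
  simp only [qReg_succ hπ0 hπ hq hτ, sum_add_distrib, sum_const, card_range, nsmul_eq_mul,
    ← mul_sum, htelescope, hreindex]
  ring

variable [Nonempty S] (hτ : 0 < τ) (hγ : 0 ≤ γ) (hP0 : ∀ sa s', 0 ≤ P sa s')
  (hP1 : ∀ sa, ∑ s', P sa s' = 1) {k : ℕ} {M e : ℝ} (hM0 : ∀ x, |qReg τ π q 0 x| ≤ M)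
  (hMk : ∀ x, |qReg τ π q k x| ≤ M) (he : ∀ x, |∑ j ∈ Icc 1 k, ε j x| ≤ e)
include hτ hγ hP0 hP1 hM0 hMk he

lemma one_sub_mul_sup'_optimal_sub_qRegSum_le {qstar : S × A → ℝ}
    (hqstar : ∀ s a, qstar (s, a)
      = r (s, a) + γ * ∑ s', P (s, a) s' * univ.sup' univ_nonempty fun a' => qstar (s', a')) :
    (1 - γ) * univ.sup' univ_nonempty (fun x => k * qstar x - qRegSum τ π q (k + 1) x)
      ≤ γ * (M + τ * log (Fintype.card A)) + (M + e) := by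
  set vstar : S → ℝ := fun s => univ.sup' univ_nonempty fun a => qstar (s, a)
  refine one_sub_mul_sup'_le hP0 hP1 hγ
    (w := fun s' => k * vstar s' - (softValue τ π q k s' - τ * log (Fintype.card A)))
    (fun s' => ?_) fun ⟨s, a⟩ => ?_
  · obtain ⟨a, -, ha⟩ := exists_mem_eq_sup' univ_nonempty fun a => qstar (s', a)
    have hU := le_sup' (fun x => k * qstar x - qRegSum τ π q (k + 1) x) (mem_univ (s', a))
    have hV := le_logSumExp hτ (fun a => qRegSum τ π q k (s', a)) a
    have hreg := (abs_le.1 (hMk (s', a))).2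
    rw [qRegSum_succ k (s', a)] at hU
    simp only [vstar, ha, softValue]
    linarith
  · have hreg := (abs_le.1 (hM0 (s, a))).1
    have hE := (abs_le.1 (he (s, a))).1
    have hsplit :
        ∑ s', P (s, a) s' * (k * vstar s' - (softValue τ π q k s' - τ * log (Fintype.card A)))
        = k * ∑ s', P (s, a) s' * vstar s'
          - ∑ s', P (s, a) s' * (softValue τ π q k s' - τ * log (Fintype.card A)) := by
      rw [mul_sum, ← sum_sub_distrib]
      exact sum_congr rfl fun _ _ => by ring
    rw [hqstar s a, qRegSum_succ_eq hπ0 hπ hq hτ.ne' k s a, hsplit]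
    linarith

lemma one_sub_mul_sup'_qRegSum_sub_evaluation_le {qπ : S × A → ℝ}
    (hqπ : ∀ s a, qπ (s, a)
      = r (s, a) + γ * ∑ s', P (s, a) s' * ∑ a', π k s' a' * qπ (s', a')) :
    (1 - γ) * univ.sup' univ_nonempty (fun x => qRegSum τ π q (k + 1) x - k * qπ x)
      ≤ γ * M + (M + e) := by
  set D := univ.sup' univ_nonempty (fun x => qRegSum τ π q (k + 1) x - k * qπ x)
  refine one_sub_mul_sup'_le hP0 hP1 hγ
    (w := fun s' => softValue τ π q k s' - τ * log (Fintype.card A)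
      - k * ∑ a', π k s' a' * qπ (s', a'))
    (fun s' => ?_) fun ⟨s, a⟩ => ?_
  · have hV := logSumExp_le_sum_softmax_mul_add hτ (fun a => qRegSum τ π q k (s', a))
    rw [← policy_eq_softmax hπ0 hπ hτ.ne'] at hV
    have hgap : ∑ a', π k s' a' * (qRegSum τ π q k (s', a') - k * qπ (s', a')) ≤ D + M := by
      refine sum_mul_le_of_le (fun a' => (policy_pos hπ0 hπ hτ.ne' k s' a').le)
        (sum_policy hπ0 hπ hτ.ne' k s') fun a' => ?_
      have hD := le_sup' (fun x => qRegSum τ π q (k + 1) x - k * qπ x) (mem_univ (s', a'))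
      have hreg := (abs_le.1 (hMk (s', a'))).1
      rw [qRegSum_succ k (s', a')] at hD
      linarith
    simp only [mul_sub, sum_sub_distrib, ← mul_sum, mul_left_comm _ (k : ℝ)] at hgap
    simp only [softValue]
    linarith
  · have hreg := (abs_le.1 (hM0 (s, a))).2
    have hE := (abs_le.1 (he (s, a))).2
    have hsplit : ∑ s', P (s, a) s' * (softValue τ π q k s' - τ * log (Fintype.card A)
          - k * ∑ a', π k s' a' * qπ (s', a'))
        = ∑ s', P (s, a) s' * (softValue τ π q k s' - τ * log (Fintype.card A))
          - k * ∑ s', P (s, a) s' * ∑ a', π k s' a' * qπ (s', a') := by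
      rw [mul_sum, ← sum_sub_distrib]
      exact sum_congr rfl fun _ _ => by ring
    rw [hqπ s a, qRegSum_succ_eq hπ0 hπ hq hτ.ne' k s a, hsplit]
    linarith

lemma one_sub_mul_mul_optimal_sub_evaluation_le (hγ1 : γ ≤ 1) {qstar qπ : S × A → ℝ}
    (hqstar : ∀ s a, qstar (s, a)
      = r (s, a) + γ * ∑ s', P (s, a) s' * univ.sup' univ_nonempty fun a' => qstar (s', a'))
    (hqπ : ∀ s a, qπ (s, a)
      = r (s, a) + γ * ∑ s', P (s, a) s' * ∑ a', π k s' a' * qπ (s', a'))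
    (x : S × A) :
    (1 - γ) * (k * (qstar x - qπ x))
      ≤ 2 * (1 + γ) * M + γ * (τ * log (Fintype.card A)) + 2 * e := by
  have hU := one_sub_mul_sup'_optimal_sub_qRegSum_le hπ0 hπ hq hτ hγ hP0 hP1 hM0 hMk he hqstar
  have hD := one_sub_mul_sup'_qRegSum_sub_evaluation_le hπ0 hπ hq hτ hγ hP0 hP1 hM0 hMk he hqπ
  have hux := le_sup' (fun x => k * qstar x - qRegSum τ π q (k + 1) x) (mem_univ x)
  have hdx := le_sup' (fun x => qRegSum τ π q (k + 1) x - k * qπ x) (mem_univ x)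
  have := mul_le_mul_of_nonneg_left (add_le_add hux hdx) (sub_nonneg.2 hγ1)
  linarith

end MunchausenVI

theorem stmt_16_general {S A : Type*} [Fintype S] [Fintype A] [Nonempty S] [Nonempty A]
    (r : S × A → ℝ) (rmax : ℝ)
    (γ : ℝ) (hγ : γ ∈ Set.Ioo (0 : ℝ) 1)
    (P : S × A → S → ℝ) (hP0 : ∀ sa s', 0 ≤ P sa s') (hP1 : ∀ sa, ∑ s', P sa s' = 1)
    (τ : ℝ) (hτ : 0 < τ) (k : ℕ) (hk : 1 ≤ k)
    (π : ℕ → S → A → ℝ) (q : ℕ → S × A → ℝ) (ε : ℕ → S × A → ℝ)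
    (hπ0 : ∀ s a, π 0 s a = 1 / (Fintype.card A : ℝ))
    (hπ : ∀ j s a, π (j + 1) s a
      = Real.exp (q j (s, a) / τ) / ∑ a', Real.exp (q j (s, a') / τ))
    (hq : ∀ j s a, q (j + 1) (s, a)
      = r (s, a) + 1 * τ * Real.log (π (j + 1) s a)
        + γ * ∑ s', P (s, a) s' *
            (∑ a', π (j + 1) s' a' * (q j (s', a') - τ * Real.log (π (j + 1) s' a')))
        + ε (j + 1) (s, a))
    (hq0 : ∀ s a, |q 0 (s, a) - τ * Real.log (π 0 s a)| ≤ rmax / (1 - γ))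
    (hbd : ∀ j, 1 ≤ j → j ≤ k →
      ∀ s a, |q j (s, a) - τ * Real.log (π j s a)| ≤ rmax / (1 - γ))
    (qstar : S × A → ℝ)
    (hqstar : ∀ s a, qstar (s, a)
      = r (s, a) + γ * ∑ s', P (s, a) s' *
          (Finset.univ.sup' Finset.univ_nonempty fun a' => qstar (s', a')))
    (qπk : S × A → ℝ)
    (hqπk : ∀ s a, qπk (s, a)
      = r (s, a) + γ * ∑ s', P (s, a) s' * (∑ a', π k s' a' * qπk (s', a'))) :
    (Finset.univ.sup' Finset.univ_nonempty fun x : S × A => |qstar x - qπk x|)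
      ≤ 2 / (1 - γ) *
          (Finset.univ.sup' Finset.univ_nonempty fun x : S × A =>
            |(1 / (k : ℝ)) * ∑ j ∈ Finset.Icc 1 k, ε j x|)
        + 4 / (1 - γ) ^ 2 * ((rmax + τ * Real.log (Fintype.card A)) / (k : ℝ)) := by
  obtain ⟨hγ0, hγ1⟩ := hγ
  have h1γ : 0 < 1 - γ := sub_pos.2 hγ1
  have hk0 : (0 : ℝ) < k := by exact_mod_cast hk
  have hπ' : ∀ j s, π (j + 1) s = softmax τ fun a => q j (s, a) := fun j s => funext (hπ j s)
  have he := abs_le_mul_sup'_abs_one_div_mul hk0 fun x => ∑ j ∈ Icc 1 k, ε j x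
  set F := univ.sup' univ_nonempty fun x : S × A => |(1 / (k : ℝ)) * ∑ j ∈ Icc 1 k, ε j x|
  have hM : 0 ≤ rmax / (1 - γ) :=
    (abs_nonneg _).trans (hq0 (Classical.arbitrary S) (Classical.arbitrary A))
  have hrmax : 0 ≤ rmax := mul_div_cancel₀ rmax h1γ.ne' ▸ mul_nonneg h1γ.le hM
  have hlog : 0 ≤ τ * log (Fintype.card A) := mul_nonneg hτ.le (log_natCast_nonneg _)
  refine sup'_le _ _ fun x _ => ?_
  have hle := evaluation_fixedPoint_le_optimality_fixedPoint hγ0.le hγ1 hP0 hP1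
    (fun s a => (policy_pos hπ0 hπ' hτ.ne' k s a).le) (sum_policy hπ0 hπ' hτ.ne' k) hqstar hqπk x
  have hkey := one_sub_mul_mul_optimal_sub_evaluation_le hπ0 hπ' hq hτ hγ0.le hP0 hP1
    (fun x => hq0 x.1 x.2) (fun x => hbd k hk le_rfl x.1 x.2) he hγ1.le hqstar hqπk x
  rw [abs_of_nonneg (sub_nonneg.2 hle)]
  have hRHS : 2 / (1 - γ) * F + 4 / (1 - γ) ^ 2 * ((rmax + τ * log (Fintype.card A)) / k)
      = (2 * (1 - γ) * k * F + 4 * (rmax + τ * log (Fintype.card A))) / ((1 - γ) ^ 2 * k) := by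
    field_simp
  rw [hRHS, le_div_iff₀ (by positivity)]
  nlinarith [mul_le_mul_of_nonneg_left hkey h1γ.le, mul_div_cancel₀ rmax h1γ.ne',
    mul_nonneg hγ0.le hrmax, mul_nonneg (mul_nonneg hγ0.le h1γ.le) hlog]

/-- Sup-norm error-averaging bound for M-VI(1,τ): under the assumptions of Corollary 1,
`‖q_* − q_{π_k}‖∞ ≤ (2/(1−γ)) ‖(1/k) ∑_{j=1}^k ε_j‖∞ + (4/(1−γ)²)(r_max + τ ln|A|)/k`. -/
theorem stmt_16 {S A : Type*} [Fintype S] [Fintype A] [Nonempty S] [Nonempty A]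
    (r : S × A → ℝ) (rmax : ℝ) (hr : ∀ sa, |r sa| ≤ rmax)
    (γ : ℝ) (hγ : γ ∈ Set.Ioo (0 : ℝ) 1)
    (P : S × A → S → ℝ) (hP0 : ∀ sa s', 0 ≤ P sa s') (hP1 : ∀ sa, ∑ s', P sa s' = 1)
    (τ : ℝ) (hτ : 0 < τ) (k : ℕ) (hk : 1 ≤ k)
    (π : ℕ → S → A → ℝ) (q : ℕ → S × A → ℝ) (ε : ℕ → S × A → ℝ)
    (hπ0 : ∀ s a, π 0 s a = 1 / (Fintype.card A : ℝ))
    (hπ : ∀ j s a, π (j + 1) s a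
      = Real.exp (q j (s, a) / τ) / ∑ a', Real.exp (q j (s, a') / τ))
    (hq : ∀ j s a, q (j + 1) (s, a)
      = r (s, a) + 1 * τ * Real.log (π (j + 1) s a)
        + γ * ∑ s', P (s, a) s' *
            (∑ a', π (j + 1) s' a' * (q j (s', a') - τ * Real.log (π (j + 1) s' a')))
        + ε (j + 1) (s, a))
    (hq0 : ∀ s a, |q 0 (s, a) - τ * Real.log (π 0 s a)| ≤ rmax / (1 - γ))
    (hbd : ∀ j, 1 ≤ j → j ≤ k →
      ∀ s a, |q j (s, a) - τ * Real.log (π j s a)| ≤ rmax / (1 - γ))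
    (qstar : S × A → ℝ)
    (hqstar : ∀ s a, qstar (s, a)
      = r (s, a) + γ * ∑ s', P (s, a) s' *
          (Finset.univ.sup' Finset.univ_nonempty fun a' => qstar (s', a')))
    (qπk : S × A → ℝ)
    (hqπk : ∀ s a, qπk (s, a)
      = r (s, a) + γ * ∑ s', P (s, a) s' * (∑ a', π k s' a' * qπk (s', a'))) :
    (Finset.univ.sup' Finset.univ_nonempty fun x : S × A => |qstar x - qπk x|)
      ≤ 2 / (1 - γ) *
          (Finset.univ.sup' Finset.univ_nonempty fun x : S × A =>
            |(1 / (k : ℝ)) * ∑ j ∈ Finset.Icc 1 k, ε j x|)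
        + 4 / (1 - γ) ^ 2 * ((rmax + τ * Real.log (Fintype.card A)) / (k : ℝ)) :=
  stmt_16_general r rmax γ hγ P hP0 hP1 τ hτ k hk π q ε hπ0 hπ hq hq0 hbd qstar hqstar qπk hqπk
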